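/- arXiv:2510.17608 — 2 statements merged into one kernel-verified Lean document; each statement's English description precedes it below -/
import Mathlib

section
/- For every T > 0 and every L₀ > 0: sup_{0 ≤ t ≤ T} L(t) ≤ max { max(L₀, 1), |α₀ − M₀| / min(α₀², 1) } · η(T). Moreover ξ(T) ≤ η(T). -/
/-- `c₀(t) = exp(∫₀ᵗ f(s) ds)`. -/
noncomputable def c0 (f : ℝ → ℝ) (t : ℝ) : ℝ := Real.exp (∫ s in (0:ℝ)..t, f s)

/-- `c₁(t) = ∫₀ᵗ exp(−2 ∫ₛᵗ f(v) dv) g(s)² ds`. -/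
noncomputable def c1 (f g : ℝ → ℝ) (t : ℝ) : ℝ :=
  ∫ s in (0:ℝ)..t, Real.exp (-2 * ∫ v in s..t, f v) * g s ^ 2

/-- `∫₀ᵗ exp(2 ∫₀ˢ f(v) dv) g(s)² ds`. -/
noncomputable def Jfg (f g : ℝ → ℝ) (t : ℝ) : ℝ :=
  ∫ s in (0:ℝ)..t, Real.exp (2 * ∫ v in (0:ℝ)..s, f v) * g s ^ 2

/-- `α(t) = 1 / (α₀⁻¹ c₀(t)⁻² + c₁(t))`. -/
noncomputable def alphaT (f g : ℝ → ℝ) (α₀ t : ℝ) : ℝ :=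
  1 / (α₀⁻¹ * ((c0 f t)⁻¹) ^ 2 + c1 f g t)

/-- `M(t) = M₀ c₀(t)² / (1 + α₀ ∫₀ᵗ exp(2 ∫₀ˢ f(v) dv) g(s)² ds)²`. -/
noncomputable def MT (f g : ℝ → ℝ) (α₀ M₀ t : ℝ) : ℝ :=
  M₀ * c0 f t ^ 2 / (1 + α₀ * Jfg f g t) ^ 2

/-- The regime-shift time `τ(α₀, M₀)`. -/
noncomputable def tau (f g : ℝ → ℝ) (α₀ M₀ : ℝ) : ℝ :=
  if 0 < α₀ - M₀ then 0
  else sInf { t : ℝ | 0 < t ∧ (M₀ - α₀) / α₀ ^ 2 < Jfg f g t }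

/-- `ξ(T)`. -/
noncomputable def xiT (f g : ℝ → ℝ) (T : ℝ) : ℝ :=
  sSup ((fun t => min (Real.exp (2 * ∫ s in (0:ℝ)..t, f s))
    (Real.exp (2 * ∫ s in (0:ℝ)..t, f s) / (Jfg f g t) ^ 2)) '' Set.Icc 0 T)

/-- `η(T)`. -/
noncomputable def etaT (f g : ℝ → ℝ) (T : ℝ) : ℝ :=
  sSup ((fun t => min (Real.exp (2 * ∫ s in (0:ℝ)..t, f s)) (1 / c1 f g t)) '' Set.Icc 0 T)

/-- The Lipschitz constant `L(t)`. -/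
noncomputable def Lt (f g : ℝ → ℝ) (α₀ M₀ L₀ t : ℝ) : ℝ :=
  max (min (1 / c1 f g t) (c0 f t ^ 2 * L₀))
    (-(alphaT f g α₀ t - MT f g α₀ M₀ t))

/-- Key algebraic inequality. -/
lemma stmt9_keyAlg (Δ a K J : ℝ) (ha : 0 < a) (hJ : 0 ≤ J) (h1 : Δ ≤ K) (h2 : Δ ≤ K * a^2)
    (hK : 0 ≤ K) :
    Δ - a^2*J ≤ K * (1+a*J)^2 ∧ (Δ - a^2*J) * J ≤ K * (1+a*J)^2 := by
  constructor
  · nlinarith [mul_nonneg hK (mul_nonneg ha.le hJ), mul_nonneg hK (sq_nonneg (a*J)),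
      mul_nonneg (mul_nonneg ha.le ha.le) hJ]
  · rcases le_total J 1 with hJ1 | hJ1
    · nlinarith [mul_nonneg (sub_nonneg.mpr h1) hJ, mul_nonneg hK (sub_nonneg.mpr hJ1),
        mul_nonneg hK (mul_nonneg ha.le hJ), mul_nonneg hK (sq_nonneg (a*J)),
        mul_nonneg (sq_nonneg a) (sq_nonneg J)]
    · have e1 : Δ * J ≤ (K * a^2) * J := mul_le_mul_of_nonneg_right h2 hJ
      have e2 : (K * a^2) * J ≤ (K * a^2) * J^2 := by
        have h3 : 0 ≤ K * a ^ 2 := by positivity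
        nlinarith [mul_nonneg h3 (mul_nonneg hJ (sub_nonneg.mpr hJ1))]
      nlinarith [mul_nonneg hK (mul_nonneg ha.le hJ), sq_nonneg (a*J)]

theorem stmt9 (f g : ℝ → ℝ)
    (hf_cont : ContinuousOn f (Set.Ici 0)) (hg_cont : ContinuousOn g (Set.Ici 0))
    (hf_nonneg : ∀ t, 0 ≤ t → 0 ≤ f t) (hg_pos : ∀ t, 0 < t → 0 < g t)
    (α₀ M₀ : ℝ) (hα₀ : 0 < α₀) (hM₀ : 0 < M₀)
    (L₀ : ℝ) (hL₀ : 0 < L₀) (T : ℝ) (hT : 0 < T) :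
    sSup ((fun t => Lt f g α₀ M₀ L₀ t) '' Set.Icc 0 T) ≤
      max (max L₀ 1) (|α₀ - M₀| / min (α₀ ^ 2) 1) * etaT f g T ∧
    xiT f g T ≤ etaT f g T := by
  have F : ℝ → ℝ := fun u => ∫ s in (0:ℝ)..u, f s
  set F : ℝ → ℝ := fun u => ∫ s in (0:ℝ)..u, f s with hFdef
  set hfun : ℝ → ℝ := fun s => Real.exp (2 * F s) * g s ^ 2 with hhdef
  -- integrability of f
  have hfint : ∀ a b : ℝ, 0 ≤ a → 0 ≤ b → IntervalIntegrable f MeasureTheory.volume a b := by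
    intro a b ha hb
    apply ContinuousOn.intervalIntegrable
    apply hf_cont.mono
    intro x hx
    rcases Set.mem_uIcc.mp hx with ⟨h1, _⟩ | ⟨h1, _⟩
    · exact le_trans ha h1
    · exact le_trans hb h1
  have hF0 : ∀ t : ℝ, 0 ≤ t → 0 ≤ F t := fun t ht =>
    intervalIntegral.integral_nonneg ht (fun s hs => hf_nonneg s hs.1)
  have hFT : ∀ t ∈ Set.Icc (0:ℝ) T, F t ≤ F T := by
    intro t ht
    have hadd : F t + (∫ s in t..T, f s) = F T :=
      intervalIntegral.integral_add_adjacent_intervals (hfint 0 t le_rfl ht.1)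
        (hfint t T ht.1 hT.le)
    have h2 : 0 ≤ ∫ s in t..T, f s :=
      intervalIntegral.integral_nonneg ht.2 (fun s hs => hf_nonneg s (le_trans ht.1 hs.1))
    linarith
  have hFcont : ContinuousOn F (Set.Icc 0 T) := by
    have h1 : MeasureTheory.IntegrableOn f (Set.uIcc 0 T) MeasureTheory.volume := by
      rw [Set.uIcc_of_le hT.le]
      exact (hf_cont.mono (fun x hx => hx.1)).integrableOn_Icc
    have := intervalIntegral.continuousOn_primitive_interval h1
    rwa [Set.uIcc_of_le hT.le] at this
  have hh_cont : ContinuousOn hfun (Set.Icc 0 T) :=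
    (Real.continuous_exp.comp_continuousOn (continuousOn_const.mul hFcont)).mul
      ((hg_cont.mono (fun x hx => hx.1)).pow 2)
  have hhint : ∀ t ∈ Set.Icc (0:ℝ) T, IntervalIntegrable hfun MeasureTheory.volume 0 t := by
    intro t ht
    apply ContinuousOn.intervalIntegrable
    apply hh_cont.mono
    rw [Set.uIcc_of_le ht.1]
    exact Set.Icc_subset_Icc le_rfl ht.2
  have hJeq : ∀ t : ℝ, Jfg f g t = ∫ s in (0:ℝ)..t, hfun s := fun t => rfl
  have hJnn : ∀ t : ℝ, 0 ≤ t → 0 ≤ Jfg f g t := by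
    intro t ht
    exact intervalIntegral.integral_nonneg ht
      (fun s _ => mul_nonneg (Real.exp_nonneg _) (sq_nonneg _))
  have hJpos : ∀ t ∈ Set.Icc (0:ℝ) T, 0 < t → 0 < Jfg f g t := by
    intro t ht htpos
    rw [hJeq]
    refine intervalIntegral.intervalIntegral_pos_of_pos_on (hhint t ht) ?_ htpos
    intro x hx
    have hg := hg_pos x hx.1
    positivity
  -- relation between c1 and Jfg
  have hc1 : ∀ t ∈ Set.Icc (0:ℝ) T, c1 f g t = Real.exp (-(2 * F t)) * Jfg f g t := by
    intro t ht
    have hcong : Set.EqOn (fun s => Real.exp (-2 * ∫ v in s..t, f v) * g s ^ 2)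
        (fun s => Real.exp (-(2 * F t)) * hfun s) (Set.uIcc 0 t) := by
      intro s hs
      rw [Set.uIcc_of_le ht.1] at hs
      have hsub : F t - F s = ∫ v in s..t, f v :=
        intervalIntegral.integral_interval_sub_left (hfint 0 t le_rfl ht.1)
          (hfint 0 s le_rfl hs.1)
      simp only [hhdef]
      rw [← hsub, show (-2 : ℝ) * (F t - F s) = (-(2 * F t)) + 2 * F s by ring, Real.exp_add,
        mul_assoc]
    calc c1 f g t = ∫ s in (0:ℝ)..t, Real.exp (-(2 * F t)) * hfun s :=
          intervalIntegral.integral_congr hcong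
      _ = Real.exp (-(2 * F t)) * ∫ s in (0:ℝ)..t, hfun s :=
          intervalIntegral.integral_const_mul _ _
      _ = Real.exp (-(2 * F t)) * Jfg f g t := by rw [← hJeq]
  have hc1nn : ∀ t ∈ Set.Icc (0:ℝ) T, 0 ≤ c1 f g t := by
    intro t ht
    rw [hc1 t ht]
    exact mul_nonneg (Real.exp_nonneg _) (hJnn t ht.1)
  -- eta facts
  have hbddEta : BddAbove ((fun t => min (Real.exp (2 * ∫ s in (0:ℝ)..t, f s)) (1 / c1 f g t)) ''
      Set.Icc 0 T) := by
    refine ⟨Real.exp (2 * F T), ?_⟩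
    rintro y ⟨t, ht, rfl⟩
    refine le_trans (min_le_left _ _) (Real.exp_le_exp.mpr ?_)
    have := hFT t ht
    linarith
  have hEta_ge : ∀ t ∈ Set.Icc (0:ℝ) T,
      min (Real.exp (2 * F t)) (1 / c1 f g t) ≤ etaT f g T :=
    fun t ht => le_csSup hbddEta ⟨t, ht, rfl⟩
  have hη1 : 1 ≤ etaT f g T := by
    have hJcont : ContinuousOn (fun t => Jfg f g t) (Set.Icc 0 T) := by
      have := intervalIntegral.continuousOn_primitive_interval'
        (hhint T ⟨hT.le, le_rfl⟩) Set.left_mem_uIcc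
      rw [Set.uIcc_of_le hT.le] at this
      exact this
    obtain ⟨δ, hδ, hball⟩ := Metric.continuousWithinAt_iff.mp
      (hJcont 0 ⟨le_rfl, hT.le⟩) 1 one_pos
    set t₀ := min (δ/2) T with ht₀def
    have ht₀pos : 0 < t₀ := lt_min (by linarith) hT
    have ht₀mem : t₀ ∈ Set.Icc (0:ℝ) T := ⟨ht₀pos.le, min_le_right _ _⟩
    have hd : dist t₀ 0 < δ := by
      rw [Real.dist_eq, sub_zero, abs_of_pos ht₀pos]
      exact lt_of_le_of_lt (min_le_left _ _) (by linarith)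
    have hJ0 : Jfg f g 0 = 0 := intervalIntegral.integral_same
    have hJt₀ : Jfg f g t₀ < 1 := by
      have := hball ht₀mem hd
      rw [hJ0, dist_zero_right] at this
      exact lt_of_le_of_lt (le_abs_self _) this
    have hc1pos : 0 < c1 f g t₀ := by
      rw [hc1 t₀ ht₀mem]
      exact mul_pos (Real.exp_pos _) (hJpos t₀ ht₀mem ht₀pos)
    have hc1lt : c1 f g t₀ < 1 := by
      rw [hc1 t₀ ht₀mem]
      calc Real.exp (-(2 * F t₀)) * Jfg f g t₀ ≤ 1 * Jfg f g t₀ := by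
            apply mul_le_mul_of_nonneg_right _ (hJnn t₀ ht₀mem.1)
            rw [Real.exp_le_one_iff]
            have := hF0 t₀ ht₀pos.le
            linarith
        _ < 1 := by rw [one_mul]; exact hJt₀
    have h1 : (1:ℝ) ≤ min (Real.exp (2 * F t₀)) (1 / c1 f g t₀) := by
      refine le_min (Real.one_le_exp ?_) ?_
      · have := hF0 t₀ ht₀pos.le; linarith
      · rw [le_div_iff₀ hc1pos, one_mul]; exact hc1lt.le
    exact le_trans h1 (hEta_ge t₀ ht₀mem)
  have hη0 : 0 ≤ etaT f g T := le_trans zero_le_one hη1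
  -- constants
  set K := |α₀ - M₀| / min (α₀ ^ 2) 1 with hKdef
  have hmpos : 0 < min (α₀^2) 1 := lt_min (by positivity) one_pos
  have hK0 : 0 ≤ K := div_nonneg (abs_nonneg _) hmpos.le
  have habsK : |α₀ - M₀| = K * min (α₀^2) 1 := (div_mul_cancel₀ _ hmpos.ne').symm
  have hK1 : |α₀ - M₀| ≤ K := by
    rw [habsK]
    calc K * min (α₀^2) 1 ≤ K * 1 := mul_le_mul_of_nonneg_left (min_le_right _ _) hK0
      _ = K := mul_one K
  have hK2 : |α₀ - M₀| ≤ K * α₀^2 := by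
    rw [habsK]
    exact mul_le_mul_of_nonneg_left (min_le_left _ _) hK0
  have hΔabs : M₀ - α₀ ≤ |α₀ - M₀| := by
    rw [abs_sub_comm]; exact le_abs_self _
  have hΔ1 : M₀ - α₀ ≤ K := le_trans hΔabs hK1
  have hΔ2 : M₀ - α₀ ≤ K * α₀^2 := le_trans hΔabs hK2
  set C := max (max L₀ 1) K with hCdef
  have hCL : max L₀ 1 ≤ C := le_max_left _ _
  have hCK : K ≤ C := le_max_right _ _
  have hC0 : 0 ≤ C := le_trans hK0 hCK
  -- formula for MT - alphaT
  have hMA : ∀ t ∈ Set.Icc (0:ℝ) T, MT f g α₀ M₀ t - alphaT f g α₀ t =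
      Real.exp (2 * F t) * ((M₀ - α₀) - α₀^2 * Jfg f g t) / (1 + α₀ * Jfg f g t)^2 := by
    intro t ht
    have hJ := hJnn t ht.1
    have hD : (0:ℝ) < 1 + α₀ * Jfg f g t := by positivity
    have hE : c0 f t = Real.exp (F t) := rfl
    have he : Real.exp (F t) ^ 2 = Real.exp (2 * F t) := by
      rw [sq, ← Real.exp_add, two_mul]
    have hepos : (0:ℝ) < Real.exp (2 * F t) := Real.exp_pos _
    rw [MT, alphaT, hc1 t ht, hE, Real.exp_neg, inv_pow, he]
    have hden : α₀⁻¹ * (Real.exp (2 * F t))⁻¹ + (Real.exp (2 * F t))⁻¹ * Jfg f g t =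
        (1 + α₀ * Jfg f g t) / (α₀ * Real.exp (2 * F t)) := by
      field_simp
    rw [hden, one_div_div]
    field_simp
    ring
  -- pointwise bound on Lt
  have hpt : ∀ t ∈ Set.Icc (0:ℝ) T, Lt f g α₀ M₀ L₀ t ≤ C * etaT f g T := by
    intro t ht
    have hm := hEta_ge t ht
    have hJ := hJnn t ht.1
    have hc1n := hc1nn t ht
    have hE2 : c0 f t ^ 2 = Real.exp (2 * F t) := by
      show Real.exp (F t) ^ 2 = _
      rw [sq, ← Real.exp_add, two_mul]
    have hepos : (0:ℝ) < Real.exp (2 * F t) := Real.exp_pos _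
    have hmaxL1 : (0:ℝ) ≤ max L₀ 1 := le_trans zero_le_one (le_max_right _ _)
    rw [Lt]
    apply max_le
    · -- first component
      have hA : min (1 / c1 f g t) (c0 f t ^ 2 * L₀) ≤
          max L₀ 1 * min (Real.exp (2 * F t)) (1 / c1 f g t) := by
        rw [mul_min_of_nonneg _ _ hmaxL1]
        refine le_min ?_ ?_
        · refine le_trans (min_le_right _ _) ?_
          rw [← hE2]
          calc c0 f t ^ 2 * L₀ ≤ c0 f t ^ 2 * max L₀ 1 :=
                mul_le_mul_of_nonneg_left (le_max_left _ _) (sq_nonneg _)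
            _ = max L₀ 1 * c0 f t ^ 2 := mul_comm _ _
        · exact le_trans (min_le_left _ _)
            (le_mul_of_one_le_left (one_div_nonneg.mpr hc1n) (le_max_right L₀ 1))
      calc min (1 / c1 f g t) (c0 f t ^ 2 * L₀) ≤
            max L₀ 1 * min (Real.exp (2 * F t)) (1 / c1 f g t) := hA
        _ ≤ max L₀ 1 * etaT f g T := mul_le_mul_of_nonneg_left hm hmaxL1
        _ ≤ C * etaT f g T := mul_le_mul_of_nonneg_right hCL hη0
    · -- second component
      rw [neg_sub]
      rcases eq_or_lt_of_le ht.1 with h0 | h0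
      · -- t = 0
        have h00 : t = 0 := h0.symm
        subst h00
        have hJ0 : Jfg f g 0 = 0 := intervalIntegral.integral_same
        have hF00 : F 0 = 0 := intervalIntegral.integral_same
        rw [hMA 0 ⟨le_rfl, hT.le⟩, hJ0, hF00]
        simp only [mul_zero, Real.exp_zero, sub_zero, add_zero, one_pow, div_one, one_mul]
        calc M₀ - α₀ ≤ K := hΔ1
          _ = K * 1 := (mul_one K).symm
          _ ≤ K * etaT f g T := mul_le_mul_of_nonneg_left hη1 hK0
          _ ≤ C * etaT f g T := mul_le_mul_of_nonneg_right hCK hη0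
      · -- t > 0
        have hJp := hJpos t ht h0
        have hD : (0:ℝ) < 1 + α₀ * Jfg f g t := by positivity
        have h1c : 1 / c1 f g t = Real.exp (2 * F t) / Jfg f g t := by
          rw [hc1 t ht, Real.exp_neg]
          field_simp
        obtain ⟨hN1, hN2⟩ := stmt9_keyAlg (M₀ - α₀) α₀ K (Jfg f g t) hα₀ hJ hΔ1 hΔ2 hK0
        rw [hMA t ht]
        have hBm : Real.exp (2 * F t) * ((M₀ - α₀) - α₀^2 * Jfg f g t) /
            (1 + α₀ * Jfg f g t)^2 ≤ K * min (Real.exp (2 * F t)) (1 / c1 f g t) := by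
          rw [mul_min_of_nonneg _ _ hK0]
          refine le_min ?_ ?_
          · rw [div_le_iff₀ (by positivity)]
            nlinarith [mul_le_mul_of_nonneg_left hN1 hepos.le]
          · rw [h1c, mul_div_assoc', div_le_div_iff₀ (by positivity) hJp]
            nlinarith [mul_le_mul_of_nonneg_left hN2 hepos.le]
        calc Real.exp (2 * F t) * ((M₀ - α₀) - α₀^2 * Jfg f g t) / (1 + α₀ * Jfg f g t)^2 ≤
              K * min (Real.exp (2 * F t)) (1 / c1 f g t) := hBm
          _ ≤ K * etaT f g T := mul_le_mul_of_nonneg_left hm hK0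
          _ ≤ C * etaT f g T := mul_le_mul_of_nonneg_right hCK hη0
  constructor
  · apply Real.sSup_le
    · rintro x ⟨t, ht, rfl⟩
      exact hpt t ht
    · exact mul_nonneg hC0 hη0
  · apply Real.sSup_le
    · rintro x ⟨t, ht, rfl⟩
      show min (Real.exp (2 * F t)) (Real.exp (2 * F t) / (Jfg f g t) ^ 2) ≤ etaT f g T
      have hepos : (0:ℝ) < Real.exp (2 * F t) := Real.exp_pos _
      rcases eq_or_lt_of_le (hJnn t ht.1) with hJ0 | hJp
      · rw [← hJ0]
        refine le_trans (min_le_right _ _) ?_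
        rw [show ((0:ℝ))^2 = 0 by ring, div_zero]
        exact hη0
      · have h1c : 1 / c1 f g t = Real.exp (2 * F t) / Jfg f g t := by
          rw [hc1 t ht, Real.exp_neg]
          field_simp
        refine le_trans ?_ (hEta_ge t ht)
        rw [h1c]
        refine le_min (min_le_left _ _) ?_
        rcases le_total (Jfg f g t) 1 with hle | hle
        · refine le_trans (min_le_left _ _) ?_
          rw [le_div_iff₀ hJp]
          exact mul_le_of_le_one_right hepos.le hle
        · refine le_trans (min_le_right _ _) ?_
          refine div_le_div_of_nonneg_left hepos.le hJp ?_
          calc Jfg f g t = Jfg f g t ^ 1 := (pow_one _).symm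
            _ ≤ Jfg f g t ^ 2 := pow_le_pow_right₀ hle one_le_two
    · exact hη0
end

section
/- (Regime shift for the contraction rates γ_{k,h}.) Let K ∈ ℕ, h > 0, T = Kh, t_k = kh, L₀, L₁ > 0, and define h̄ = min { log 2 / max_{0 ≤ t ≤ T} f(t), inf_{τ(α₀,M₀) < t ≤ T} [ (1/4) g(t)² (α(t) − M(t)) ] / [ (1/8) g(t)⁴ L(t)² + (1/2) L₁ g(t)² ] }. If 0 < h < h̄, then γ_{k,h} < 1 for every k ∈ {1, …, ⌊K − τ(α₀,M₀)/h⌋} and γ_{k,h} > 1 for every k ∈ {⌈K − τ(α₀,M₀)/h⌉ + 1, …, K}. Moreover, for any ℓ ∈ ℕ, if γ̃_{k,h} denotes the corresponding quantity with T replaced by T̃ = (K+ℓ)h, then γ̃_{k+ℓ,h} = γ_{k,h} for every k ∈ {1, …, K}. -/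
/-- The integrand `t ↦ δ_k(T−t)`, with `tkm1 = t_{k−1}`. -/
noncomputable def deltaInt (f g : ℝ → ℝ) (α₀ M₀ L₀ T h tkm1 t : ℝ) : ℝ :=
  1/2 * Real.exp (-(∫ s in tkm1..t, f (T - s))) * g (T - t) ^ 2 *
      (alphaT f g α₀ (T - t) - MT f g α₀ M₀ (T - t)) -
    1/8 * h * g (T - t) ^ 4 * Lt f g α₀ M₀ L₀ (T - t) ^ 2

/-- The contraction rate `γ_{k,h}`. -/
noncomputable def gammaK (f g : ℝ → ℝ) (α₀ M₀ L₀ L₁ T h : ℝ) (k : ℕ) : ℝ :=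
  1 - (∫ t in (((k : ℝ) - 1) * h)..((k : ℝ) * h),
        deltaInt f g α₀ M₀ L₀ T h (((k : ℝ) - 1) * h) t) +
    1/2 * L₁ * h * ∫ t in (((k : ℝ) - 1) * h)..((k : ℝ) * h), g (T - t) ^ 2

/-- The step-size threshold `h̄`. -/
noncomputable def hbar (f g : ℝ → ℝ) (α₀ M₀ L₀ L₁ T : ℝ) : ℝ :=
  min (Real.log 2 / sSup (f '' Set.Icc 0 T))
    (sInf ((fun t =>
        (1/4 * g t ^ 2 * (alphaT f g α₀ t - MT f g α₀ M₀ t)) /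
          (1/8 * g t ^ 4 * Lt f g α₀ M₀ L₀ t ^ 2 + 1/2 * L₁ * g t ^ 2)) ''
      Set.Ioc (tau f g α₀ M₀) T))

/-!
Because `α − M = c₀² (α₀ − M₀ + α₀² J) / (1 + α₀ J)²` with `J = Jfg f g`, the drift of `δ_k` has
the sign of `α₀ − M₀ + α₀² J`, and `τ` is the first time `J` exceeds `(M₀ − α₀)/α₀²`.
Block `k` integrates over `T − t ∈ [T − t_k, T − t_{k−1}]`. If this lies in `[τ, T]`, then
`h < log 2 / max f` keeps the weight `exp(−∫ f)` above `1/2`, and the second part of `h < h̄`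
makes `¼ g² (α − M)` dominate the `h`-correction of `δ_k` together with the `L₁` term, so
`γ_{k,h} < 1`. If it lies in `[0, τ]`, continuity of `J` at `τ` gives `α − M ≤ 0` there, so
`δ_k ≤ 0` and the `L₁` term pushes `γ_{k,h}` above `1`. The shift identity is the substitution
`t ↦ t + ℓh`.
-/

open Set MeasureTheory intervalIntegral

lemma continuousOn_Ici_primitive {φ : ℝ → ℝ} (hφ : ContinuousOn φ (Ici 0)) :
    ContinuousOn (fun t => ∫ s in (0:ℝ)..t, φ s) (Ici 0) := by
  intro x hx
  have hx1 : (0:ℝ) ≤ x + 1 := by linarith [mem_Ici.1 hx]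
  have hprim := continuousOn_primitive_interval (μ := volume)
    ((hφ.mono (by rw [uIcc_of_le hx1]; exact Icc_subset_Ici_self)).integrableOn_compact
      isCompact_uIcc) x (by rw [uIcc_of_le hx1]; exact ⟨hx, by linarith⟩)
  refine hprim.mono_of_mem_nhdsWithin ?_
  rw [uIcc_of_le hx1, ← Ici_inter_Iic]
  exact inter_mem_nhdsWithin _ (Iic_mem_nhds (by linarith))

lemma intervalIntegrable_of_continuousOn_Ioo_of_abs_le {F : ℝ → ℝ} {a b C : ℝ} (hab : a ≤ b)
    (hF : ContinuousOn F (Ioo a b)) (hC : ∀ t ∈ Ioo a b, |F t| ≤ C) :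
    IntervalIntegrable F volume a b := by
  rw [intervalIntegrable_iff_integrableOn_Ioo_of_le hab]
  exact IntegrableOn.of_bound measure_Ioo_lt_top (hF.aestronglyMeasurable measurableSet_Ioo) C
    ((ae_restrict_iff' measurableSet_Ioo).2 (ae_of_all _ hC))

lemma lt_of_pos_of_lt_sInf {A : Set ℝ} {h x : ℝ} (hh : 0 < h) (hA : h < sInf A) (hx : x ∈ A) :
    h < x := by
  by_cases hbdd : BddBelow A
  · exact hA.trans_le (csInf_le hbdd hx)
  · rw [Real.sInf_of_not_bddBelow hbdd] at hA
    linarith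

lemma le_of_mem_Icc_sInf_setOf_lt {φ : ℝ → ℝ} {c : ℝ} (hpos : 0 < sInf {t | 0 < t ∧ c < φ t})
    (hφ : ContinuousOn φ (Icc 0 (sInf {t | 0 < t ∧ c < φ t}))) {s : ℝ}
    (hs : s ∈ Icc 0 (sInf {t | 0 < t ∧ c < φ t})) : φ s ≤ c := by
  rw [← closure_Ioo hpos.ne] at hs hφ
  refine le_on_closure (g := fun _ => c) (fun x hx => ?_) hφ continuousOn_const hs
  by_contra hlt
  have hbdd : BddBelow {t | 0 < t ∧ c < φ t} := ⟨0, fun y hy => hy.1.le⟩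
  exact (csInf_le hbdd ⟨hx.1, not_le.1 hlt⟩).not_gt hx.2

lemma ContinuousOn.comp_const_sub_Icc {F : ℝ → ℝ} (hF : ContinuousOn F (Ici 0)) {a b T : ℝ}
    (hbT : b ≤ T) : ContinuousOn (fun t => F (T - t)) (Icc a b) :=
  hF.comp (continuousOn_const.sub continuousOn_id) fun t ht => by
    simp only [mem_Ici]
    linarith [ht.2]

noncomputable def hbarRatio (f g : ℝ → ℝ) (α₀ M₀ L₀ L₁ t : ℝ) : ℝ :=
  (1/4 * g t ^ 2 * (alphaT f g α₀ t - MT f g α₀ M₀ t)) /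
    (1/8 * g t ^ 4 * Lt f g α₀ M₀ L₀ t ^ 2 + 1/2 * L₁ * g t ^ 2)

section

variable {f g : ℝ → ℝ} {α₀ M₀ L₀ : ℝ}

lemma tau_nonneg : 0 ≤ tau f g α₀ M₀ := by
  unfold tau
  split
  · exact le_rfl
  · exact Real.sInf_nonneg fun _ hx => hx.1.le

lemma continuousOn_c0 (hf : ContinuousOn f (Ici 0)) : ContinuousOn (c0 f) (Ici 0) :=
  Real.continuous_exp.comp_continuousOn (continuousOn_Ici_primitive hf)

lemma c0_pos (f : ℝ → ℝ) (t : ℝ) : 0 < c0 f t := Real.exp_pos _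

lemma continuousOn_Jfg_integrand (hf : ContinuousOn f (Ici 0)) (hg : ContinuousOn g (Ici 0)) :
    ContinuousOn (fun s => Real.exp (2 * ∫ v in (0:ℝ)..s, f v) * g s ^ 2) (Ici 0) :=
  (Real.continuous_exp.comp_continuousOn
    (continuousOn_const.mul (continuousOn_Ici_primitive hf))).mul (hg.pow 2)

lemma continuousOn_Jfg (hf : ContinuousOn f (Ici 0)) (hg : ContinuousOn g (Ici 0)) :
    ContinuousOn (Jfg f g) (Ici 0) :=
  continuousOn_Ici_primitive (continuousOn_Jfg_integrand hf hg)

lemma Jfg_nonneg {t : ℝ} (ht : 0 ≤ t) : 0 ≤ Jfg f g t :=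
  integral_nonneg ht fun _ _ => by positivity

lemma Jfg_pos (hf : ContinuousOn f (Ici 0)) (hg : ContinuousOn g (Ici 0))
    (hg_pos : ∀ t, 0 < t → 0 < g t) {t : ℝ} (ht : 0 < t) : 0 < Jfg f g t := by
  refine intervalIntegral_pos_of_pos_on ?_ (fun s hs => ?_) ht
  · refine ContinuousOn.intervalIntegrable ((continuousOn_Jfg_integrand hf hg).mono ?_)
    rw [uIcc_of_le ht.le]
    exact Icc_subset_Ici_self
  · have := hg_pos s hs.1
    positivity

lemma c1_eq_Jfg_div (hf : ContinuousOn f (Ici 0)) {t : ℝ} (ht : 0 ≤ t) :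
    c1 f g t = Jfg f g t / c0 f t ^ 2 := by
  have hint : ∀ s, 0 ≤ s → IntervalIntegrable f volume 0 s := fun s hs =>
    (hf.mono (by rw [uIcc_of_le hs]; exact Icc_subset_Ici_self)).intervalIntegrable
  rw [c1, Jfg, ← intervalIntegral.integral_div]
  refine integral_congr fun s hs => ?_
  rw [uIcc_of_le ht] at hs
  rw [← integral_interval_sub_left (hint t ht) (hint s hs.1), c0, ← Real.exp_nat_mul,
    div_eq_mul_inv, ← Real.exp_neg, mul_right_comm, ← Real.exp_add]
  ring_nf

lemma continuousOn_c1 (hf : ContinuousOn f (Ici 0)) (hg : ContinuousOn g (Ici 0)) :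
    ContinuousOn (c1 f g) (Ici 0) :=
  ((continuousOn_Jfg hf hg).div ((continuousOn_c0 hf).pow 2)
    fun t _ => (pow_pos (c0_pos f t) 2).ne').congr fun _ ht => c1_eq_Jfg_div hf ht

lemma c1_pos (hf : ContinuousOn f (Ici 0)) (hg : ContinuousOn g (Ici 0))
    (hg_pos : ∀ t, 0 < t → 0 < g t) {t : ℝ} (ht : 0 < t) : 0 < c1 f g t := by
  rw [c1_eq_Jfg_div hf ht.le]
  exact div_pos (Jfg_pos hf hg hg_pos ht) (pow_pos (c0_pos f t) 2)

lemma alphaT_sub_MT_eq (hf : ContinuousOn f (Ici 0)) (hα₀ : 0 < α₀) {t : ℝ} (ht : 0 ≤ t) :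
    alphaT f g α₀ t - MT f g α₀ M₀ t =
      c0 f t ^ 2 * (α₀ - M₀ + α₀ ^ 2 * Jfg f g t) / (1 + α₀ * Jfg f g t) ^ 2 := by
  have hc0 := c0_pos f t
  have hJ : 0 < 1 + α₀ * Jfg f g t := by have := Jfg_nonneg (f := f) (g := g) ht; positivity
  rw [alphaT, MT, c1_eq_Jfg_div hf ht]
  field_simp
  ring

lemma continuousOn_alphaT_sub_MT (hf : ContinuousOn f (Ici 0)) (hg : ContinuousOn g (Ici 0))
    (hα₀ : 0 < α₀) : ContinuousOn (fun t => alphaT f g α₀ t - MT f g α₀ M₀ t) (Ici 0) := by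
  refine ContinuousOn.congr ?_ fun t ht => alphaT_sub_MT_eq hf hα₀ ht
  refine (((continuousOn_c0 hf).pow 2).mul (continuousOn_const.add
    (continuousOn_const.mul (continuousOn_Jfg hf hg)))).div
    ((continuousOn_const.add (continuousOn_const.mul (continuousOn_Jfg hf hg))).pow 2)
    fun t ht => ?_
  have := Jfg_nonneg (f := f) (g := g) ht
  positivity

lemma continuousOn_Lt (hf : ContinuousOn f (Ici 0)) (hg : ContinuousOn g (Ici 0))
    (hg_pos : ∀ t, 0 < t → 0 < g t) (hα₀ : 0 < α₀) :
    ContinuousOn (Lt f g α₀ M₀ L₀) (Ioi 0) :=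
  ((continuousOn_const.div ((continuousOn_c1 hf hg).mono Ioi_subset_Ici_self)
      fun _ ht => (c1_pos hf hg hg_pos ht).ne').inf
    ((((continuousOn_c0 hf).pow 2).mul continuousOn_const).mono Ioi_subset_Ici_self)).sup
    ((continuousOn_alphaT_sub_MT hf hg hα₀).mono Ioi_subset_Ici_self).neg

lemma abs_Lt_le (t : ℝ) :
    |Lt f g α₀ M₀ L₀ t| ≤ max (c0 f t ^ 2 * L₀) |alphaT f g α₀ t - MT f g α₀ M₀ t| := by
  rw [abs_le, Lt]
  constructor
  · exact (neg_le_neg ((le_abs_self _).trans (le_max_right _ _))).trans (le_max_right _ _)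
  · exact max_le ((min_le_right _ _).trans (le_max_left _ _))
      ((neg_le_abs _).trans (le_max_right _ _))

lemma exists_abs_Lt_le (hf : ContinuousOn f (Ici 0)) (hg : ContinuousOn g (Ici 0))
    (hα₀ : 0 < α₀) (T : ℝ) : ∃ C, ∀ s ∈ Icc 0 T, |Lt f g α₀ M₀ L₀ s| ≤ C := by
  obtain ⟨C, hC⟩ := isCompact_Icc.exists_bound_of_continuousOn
    (((((continuousOn_c0 hf).pow 2).mul continuousOn_const).sup
      (continuousOn_alphaT_sub_MT (M₀ := M₀) hf hg hα₀).abs).mono Icc_subset_Ici_self)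
  exact ⟨C, fun s hs => (abs_Lt_le s).trans ((le_abs_self _).trans (hC s hs))⟩

end

section

variable {f g : ℝ → ℝ} {α₀ M₀ L₀ L₁ T h : ℝ}

lemma intervalIntegrable_deltaInt (hf : ContinuousOn f (Ici 0)) (hg : ContinuousOn g (Ici 0))
    (hg_pos : ∀ t, 0 < t → 0 < g t) (hα₀ : 0 < α₀) {a b : ℝ} (ha : 0 ≤ a) (hab : a ≤ b)
    (hbT : b ≤ T) : IntervalIntegrable (deltaInt f g α₀ M₀ L₀ T h a) volume a b := by
  have hexp : ContinuousOn (fun t => Real.exp (-∫ s in a..t, f (T - s))) (Icc a b) := by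
    have hprim := continuousOn_primitive_interval (μ := volume)
      (by rw [uIcc_of_le hab]; exact (hf.comp_const_sub_Icc hbT).integrableOn_Icc)
    rw [uIcc_of_le hab] at hprim
    exact Real.continuous_exp.comp_continuousOn hprim.neg
  have hmain : IntervalIntegrable (fun t => 1/2 * Real.exp (-∫ s in a..t, f (T - s)) *
      g (T - t) ^ 2 * (alphaT f g α₀ (T - t) - MT f g α₀ M₀ (T - t))) volume a b := by
    refine ContinuousOn.intervalIntegrable ?_
    rw [uIcc_of_le hab]
    exact ((continuousOn_const.mul hexp).mul ((hg.comp_const_sub_Icc hbT).pow 2)).mul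
      ((continuousOn_alphaT_sub_MT hf hg hα₀).comp_const_sub_Icc hbT)
  obtain ⟨C, hC⟩ := exists_abs_Lt_le (M₀ := M₀) (L₀ := L₀) hf hg hα₀ T
  -- `1 / c1` takes the junk value `0` at `0`, so `Lt` is continuous only on `(0, ∞)`: near
  -- `t = T` we rely on boundedness instead.
  have hLt : IntervalIntegrable (fun t => Lt f g α₀ M₀ L₀ (T - t) ^ 2) volume a b := by
    refine intervalIntegrable_of_continuousOn_Ioo_of_abs_le hab (C := C ^ 2)
      (((continuousOn_Lt hf hg hg_pos hα₀).comp (continuousOn_const.sub continuousOn_id)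
        fun t ht => ?_).pow 2) fun t ht => ?_
    · show 0 < T - t
      linarith [ht.2]
    · rw [abs_pow]
      exact pow_le_pow_left₀ (abs_nonneg _)
        (hC _ ⟨by linarith [ht.2], by linarith [ht.1]⟩) 2
  exact hmain.sub (hLt.continuousOn_mul (g := fun t => 1/8 * h * g (T - t) ^ 4)
    (by rw [uIcc_of_le hab]; exact continuousOn_const.mul ((hg.comp_const_sub_Icc hbT).pow 4)))

lemma integral_comp_sub_le_log_two (hf : ContinuousOn f (Ici 0)) (hh : 0 < h)
    (hlog : h < Real.log 2 / sSup (f '' Icc 0 T)) {a t : ℝ} (ha : 0 ≤ a)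
    (ht : t ∈ Icc a (a + h)) (hT : a + h ≤ T) :
    ∫ s in a..t, f (T - s) ≤ Real.log 2 := by
  set F := sSup (f '' Icc 0 T)
  have hF : ∀ s ∈ Icc a t, f (T - s) ≤ F := fun s hs =>
    le_csSup (isCompact_Icc.bddAbove_image (hf.mono Icc_subset_Ici_self))
      ⟨T - s, ⟨by linarith [hs.2, ht.2], by linarith [hs.1]⟩, rfl⟩
  have hFpos : 0 < F := by
    by_contra! hF0
    linarith [div_nonpos_of_nonneg_of_nonpos (Real.log_nonneg one_le_two) hF0]
  have hint : IntervalIntegrable (fun s => f (T - s)) volume a t := by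
    refine ContinuousOn.intervalIntegrable ?_
    rw [uIcc_of_le ht.1]
    exact hf.comp_const_sub_Icc (by linarith [ht.2])
  calc ∫ s in a..t, f (T - s) ≤ ∫ _ in a..t, F :=
        integral_mono_on ht.1 hint intervalIntegrable_const hF
    _ = (t - a) * F := by simp
    _ ≤ h * F := by gcongr; linarith [ht.2]
    _ ≤ Real.log 2 := ((lt_div_iff₀ hFpos).1 hlog).le

lemma half_mul_lt_deltaInt (hh : 0 < h) (hL₁ : 0 < L₁) {a t : ℝ} (hg : 0 < g (T - t))
    (hexp : ∫ s in a..t, f (T - s) ≤ Real.log 2)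
    (hratio : h < hbarRatio f g α₀ M₀ L₀ L₁ (T - t)) :
    1/2 * L₁ * h * g (T - t) ^ 2 < deltaInt f g α₀ M₀ L₀ T h a t := by
  have hE : 1/2 ≤ Real.exp (-∫ s in a..t, f (T - s)) :=
    calc (1/2 : ℝ) = Real.exp (-Real.log 2) := by
          rw [Real.exp_neg, Real.exp_log two_pos, one_div]
      _ ≤ _ := Real.exp_le_exp.2 (neg_le_neg hexp)
  set E := Real.exp (-∫ s in a..t, f (T - s))
  set G := g (T - t)
  set A := alphaT f g α₀ (T - t) - MT f g α₀ M₀ (T - t)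
  set Λ := Lt f g α₀ M₀ L₀ (T - t)
  have hden : 0 < 1/8 * G ^ 4 * Λ ^ 2 + 1/2 * L₁ * G ^ 2 := by positivity
  have hlt : h * (1/8 * G ^ 4 * Λ ^ 2 + 1/2 * L₁ * G ^ 2) < 1/4 * G ^ 2 * A :=
    (lt_div_iff₀ hden).1 hratio
  have hGA : 0 < G ^ 2 * A := by nlinarith [mul_pos hh hden]
  rw [deltaInt]
  nlinarith [mul_nonneg (sub_nonneg.2 hE) hGA.le]

lemma gammaK_lt_one (hf : ContinuousOn f (Ici 0)) (hg : ContinuousOn g (Ici 0))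
    (hg_pos : ∀ t, 0 < t → 0 < g t) (hα₀ : 0 < α₀) (hL₁ : 0 < L₁) (hh : 0 < h) {τ : ℝ}
    (hlog : h < Real.log 2 / sSup (f '' Icc 0 T))
    (hratio : h < sInf (hbarRatio f g α₀ M₀ L₀ L₁ '' Ioc τ T)) (hτ : 0 ≤ τ) {k : ℕ}
    (hk : 1 ≤ k) (hkτ : k * h ≤ T - τ) : gammaK f g α₀ M₀ L₀ L₁ T h k < 1 := by
  rw [gammaK]
  set a := ((k : ℝ) - 1) * h
  have ha : 0 ≤ a := mul_nonneg (sub_nonneg.2 (Nat.one_le_cast.2 hk)) hh.le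
  have hb : (k : ℝ) * h = a + h := by ring
  rw [hb] at hkτ ⊢
  have hpos : ∀ t ∈ Ioo a (a + h),
      0 < deltaInt f g α₀ M₀ L₀ T h a t - 1/2 * L₁ * h * g (T - t) ^ 2 := fun t ht =>
    sub_pos.2 (half_mul_lt_deltaInt hh hL₁ (hg_pos _ (by linarith [ht.2]))
      (integral_comp_sub_le_log_two hf hh hlog ha ⟨ht.1.le, ht.2.le⟩ (by linarith))
      (lt_of_pos_of_lt_sInf hh hratio ⟨T - t, ⟨by linarith [ht.2], by linarith [ht.1]⟩, rfl⟩))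
  have hδ := intervalIntegrable_deltaInt (M₀ := M₀) (L₀ := L₀) (h := h) hf hg hg_pos hα₀ ha
    (le_add_of_nonneg_right hh.le) (by linarith)
  have hg2 : IntervalIntegrable (fun t => 1/2 * L₁ * h * g (T - t) ^ 2) volume a (a + h) := by
    refine ContinuousOn.intervalIntegrable ?_
    rw [uIcc_of_le (le_add_of_nonneg_right hh.le)]
    exact continuousOn_const.mul ((hg.comp_const_sub_Icc (by linarith)).pow 2)
  have hint := intervalIntegral_pos_of_pos_on (hδ.sub hg2) hpos (lt_add_of_pos_right a hh)
  rw [integral_sub hδ hg2, intervalIntegral.integral_const_mul] at hint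
  linarith

lemma alphaT_sub_MT_nonpos (hf : ContinuousOn f (Ici 0)) (hg : ContinuousOn g (Ici 0))
    (hα₀ : 0 < α₀) (hτ : 0 < tau f g α₀ M₀) {s : ℝ} (hs : s ∈ Icc 0 (tau f g α₀ M₀)) :
    alphaT f g α₀ s - MT f g α₀ M₀ s ≤ 0 := by
  have hbranch : ¬ 0 < α₀ - M₀ := fun h => hτ.ne' (by rw [tau, if_pos h])
  rw [tau, if_neg hbranch] at hτ hs
  have hJ := le_of_mem_Icc_sInf_setOf_lt hτ ((continuousOn_Jfg hf hg).mono Icc_subset_Ici_self) hs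
  rw [le_div_iff₀ (by positivity)] at hJ
  rw [alphaT_sub_MT_eq hf hα₀ hs.1]
  exact div_nonpos_of_nonpos_of_nonneg
    (mul_nonpos_of_nonneg_of_nonpos (sq_nonneg _) (by linarith)) (sq_nonneg _)

lemma deltaInt_nonpos (hh : 0 ≤ h) {a t : ℝ}
    (hA : alphaT f g α₀ (T - t) - MT f g α₀ M₀ (T - t) ≤ 0) :
    deltaInt f g α₀ M₀ L₀ T h a t ≤ 0 := by
  rw [deltaInt, sub_nonpos]
  exact (mul_nonpos_of_nonneg_of_nonpos (by positivity) hA).trans (by positivity)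

lemma one_lt_gammaK (hf : ContinuousOn f (Ici 0)) (hg : ContinuousOn g (Ici 0))
    (hg_pos : ∀ t, 0 < t → 0 < g t) (hα₀ : 0 < α₀) (hL₁ : 0 < L₁) (hh : 0 < h) {k : ℕ}
    (hτ : 0 < tau f g α₀ M₀) (hτk : T - tau f g α₀ M₀ ≤ (k - 1) * h) (hkT : k * h ≤ T) :
    1 < gammaK f g α₀ M₀ L₀ L₁ T h k := by
  rw [gammaK]
  set a := ((k : ℝ) - 1) * h
  have hb : (k : ℝ) * h = a + h := by ring
  rw [hb] at hkT ⊢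
  have hab : a < a + h := lt_add_of_pos_right a hh
  have hδ : ∫ t in a..a + h, deltaInt f g α₀ M₀ L₀ T h a t ≤ 0 := by
    have : 0 ≤ ∫ t in a..a + h, -deltaInt f g α₀ M₀ L₀ T h a t := integral_nonneg hab.le fun t ht => neg_nonneg.2 <| deltaInt_nonpos (L₀ := L₀) hh.le
      (alphaT_sub_MT_nonpos hf hg hα₀ hτ ⟨by linarith [ht.2], by linarith [ht.1]⟩)
    rwa [intervalIntegral.integral_neg, neg_nonneg] at this
  have hg2 : 0 < ∫ t in a..a + h, g (T - t) ^ 2 := by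
    refine intervalIntegral_pos_of_pos_on (ContinuousOn.intervalIntegrable ?_)
      (fun t ht => pow_pos (hg_pos _ (by linarith [ht.2])) 2) hab
    rw [uIcc_of_le hab.le]
    exact (hg.comp_const_sub_Icc hkT).pow 2
  nlinarith [mul_pos (mul_pos hL₁ hh) hg2]

lemma deltaInt_add (T h a t c : ℝ) :
    deltaInt f g α₀ M₀ L₀ (T + c) h (a + c) (t + c) = deltaInt f g α₀ M₀ L₀ T h a t := by
  rw [deltaInt, deltaInt, ← integral_comp_add_right (fun s => f (T + c - s))]
  simp only [add_sub_add_right_eq_sub]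

lemma gammaK_add_nat_mul (T h : ℝ) (k ℓ : ℕ) :
    gammaK f g α₀ M₀ L₀ L₁ (T + ℓ * h) h (k + ℓ) = gammaK f g α₀ M₀ L₀ L₁ T h k := by
  have ha : (((k + ℓ : ℕ) : ℝ) - 1) * h = ((k : ℝ) - 1) * h + ℓ * h := by push_cast; ring
  have hb : ((k + ℓ : ℕ) : ℝ) * h = (k : ℝ) * h + ℓ * h := by push_cast; ring
  rw [gammaK, gammaK, ha, hb,
    ← integral_comp_add_right (fun t => deltaInt f g α₀ M₀ L₀ (T + ℓ * h) h _ t),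
    ← integral_comp_add_right (fun t => g (T + ℓ * h - t) ^ 2)]
  simp only [deltaInt_add, add_sub_add_right_eq_sub]

end

theorem stmt16_general (f g : ℝ → ℝ)
    (hf_cont : ContinuousOn f (Set.Ici 0)) (hg_cont : ContinuousOn g (Set.Ici 0))
    (hg_pos : ∀ t, 0 < t → 0 < g t)
    (α₀ M₀ L₀ L₁ : ℝ) (hα₀ : 0 < α₀) (hL₁ : 0 < L₁)
    (K : ℕ) (h : ℝ) (hh : 0 < h)
    (hhbar : h < hbar f g α₀ M₀ L₀ L₁ ((K : ℝ) * h)) :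
    (∀ k : ℕ, 1 ≤ k → (k : ℤ) ≤ ⌊(K : ℝ) - tau f g α₀ M₀ / h⌋ →
      gammaK f g α₀ M₀ L₀ L₁ ((K : ℝ) * h) h k < 1) ∧
    (∀ k : ℕ, ⌈(K : ℝ) - tau f g α₀ M₀ / h⌉ + 1 ≤ (k : ℤ) → k ≤ K →
      1 < gammaK f g α₀ M₀ L₀ L₁ ((K : ℝ) * h) h k) ∧
    (∀ ℓ k : ℕ, 1 ≤ k → k ≤ K →
      gammaK f g α₀ M₀ L₀ L₁ (((K : ℝ) + (ℓ : ℝ)) * h) h (k + ℓ) =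
        gammaK f g α₀ M₀ L₀ L₁ ((K : ℝ) * h) h k) := by
  obtain ⟨hlog, hratio⟩ := lt_min_iff.1 hhbar
  set τ := tau f g α₀ M₀
  have hKτ : ((K : ℝ) - τ / h) * h = K * h - τ := by rw [sub_mul, div_mul_cancel₀ _ hh.ne']
  refine ⟨fun k hk hkτ => ?_, fun k hkτ hkK => ?_, fun ℓ k _ _ => ?_⟩
  · have hk' : (k : ℝ) ≤ K - τ / h := (Int.cast_le.2 hkτ).trans (Int.floor_le _)
    exact gammaK_lt_one hf_cont hg_cont hg_pos hα₀ hL₁ hh hlog hratio tau_nonneg hk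
      (hKτ ▸ mul_le_mul_of_nonneg_right hk' hh.le)
  · have hk' : (K : ℝ) - τ / h ≤ k - 1 := by
      have := (Int.le_ceil _).trans (Int.cast_le.2 (le_sub_iff_add_le.2 hkτ))
      push_cast at this
      exact this
    have hkτ' := hKτ ▸ mul_le_mul_of_nonneg_right hk' hh.le
    have hkK' : (k : ℝ) * h ≤ K * h := by gcongr
    exact one_lt_gammaK hf_cont hg_cont hg_pos hα₀ hL₁ hh (by nlinarith) (by linarith) hkK'
  · rw [add_mul]
    exact gammaK_add_nat_mul _ _ _ _

theorem stmt16 (f g : ℝ → ℝ)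
    (hf_cont : ContinuousOn f (Set.Ici 0)) (hg_cont : ContinuousOn g (Set.Ici 0))
    (hf_nonneg : ∀ t, 0 ≤ t → 0 ≤ f t) (hg_pos : ∀ t, 0 < t → 0 < g t)
    (α₀ M₀ L₀ L₁ : ℝ) (hα₀ : 0 < α₀) (hM₀ : 0 < M₀) (hL₀ : 0 < L₀) (hL₁ : 0 < L₁)
    (K : ℕ) (hK : 1 ≤ K) (h : ℝ) (hh : 0 < h)
    (hhbar : h < hbar f g α₀ M₀ L₀ L₁ ((K : ℝ) * h)) :
    (∀ k : ℕ, 1 ≤ k → (k : ℤ) ≤ ⌊(K : ℝ) - tau f g α₀ M₀ / h⌋ →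
      gammaK f g α₀ M₀ L₀ L₁ ((K : ℝ) * h) h k < 1) ∧
    (∀ k : ℕ, ⌈(K : ℝ) - tau f g α₀ M₀ / h⌉ + 1 ≤ (k : ℤ) → k ≤ K →
      1 < gammaK f g α₀ M₀ L₀ L₁ ((K : ℝ) * h) h k) ∧
    (∀ ℓ k : ℕ, 1 ≤ k → k ≤ K →
      gammaK f g α₀ M₀ L₀ L₁ (((K : ℝ) + (ℓ : ℝ)) * h) h (k + ℓ) =
        gammaK f g α₀ M₀ L₀ L₁ ((K : ℝ) * h) h k) :=
  stmt16_general f g hf_cont hg_cont hg_pos α₀ M₀ L₀ L₁ hα₀ hL₁ K h hh hhbar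
end
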